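/- Let Ω ⊂ ℂⁿ be a bounded strictly pseudoconvex domain, ψ ∈ C^{0,α}(∂Ω), φ ∈ PSH(Ω) ∩ C^{0,α}(closure Ω) with φ = 0 on ∂Ω, and suppose the solution u of the Dirichlet problem satisfies φ + h ≤ u ≤ h on Ω, where h is the Perron–Bremermann envelope of ψ (which is plurisubharmonic and α-Hölder on the closure with h = ψ on ∂Ω). Define u_δ(z) = sup_{|ζ|≤δ} u(z+ζ) for z ∈ Ω_δ. Then for 0 < δ ≤ ε and z ∈ closure(Ω_δ) ∖ Ω_ε, one has u_δ(z) ≤ u(z) + C ε^α with C depending only on the Hölder norms of h and φ. -/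

import Mathlib

open MeasureTheory Complex Topology Filter
open scoped ENNReal NNReal Real

noncomputable section

/-- ℂⁿ as a Euclidean space. -/
abbrev Cn (n : ℕ) := EuclideanSpace ℂ (Fin n)

instance {n : ℕ} : MeasurableSpace (Cn n) := WithLp.measurableSpace 2 (Fin n → ℂ)
instance {n : ℕ} : BorelSpace (Cn n) := PiLp.borelSpace 2
instance {n : ℕ} : MeasureSpace (Cn n) := ⟨(volume : Measure (Fin n → ℂ)).map (MeasurableEquiv.toLp 2 (Fin n → ℂ))⟩

/-- The `j`-th standard basis vector of ℂⁿ. -/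
def basisVec {n : ℕ} (j : Fin n) : Cn n := EuclideanSpace.single j 1

/-- Plurisubharmonicity on an open set: upper semicontinuity together with the
sub-mean value inequality on every complex line. -/
def PSHOn {n : ℕ} (u : Cn n → ℝ) (Ω : Set (Cn n)) : Prop :=
  UpperSemicontinuousOn u Ω ∧
  ∀ z ∈ Ω, ∀ w : Cn n, ∀ r : ℝ, 0 < r →
    (∀ t : ℂ, ‖t‖ ≤ r → z + t • w ∈ Ω) →
    u z ≤ (2 * Real.pi)⁻¹ *
      ∫ θ in (0:ℝ)..(2 * Real.pi), u (z + ((r : ℂ) * Complex.exp (θ * Complex.I)) • w)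

/-- The complex Hessian `∂²f/∂z_j∂z̄_k` of a real-valued function, expressed through the
real second Fréchet derivative. -/
def complexHessian {n : ℕ} (f : Cn n → ℝ) (z : Cn n) (j k : Fin n) : ℂ :=
  (((iteratedFDeriv ℝ 2 f z ![basisVec j, basisVec k] +
      iteratedFDeriv ℝ 2 f z ![Complex.I • basisVec j, Complex.I • basisVec k] : ℝ) : ℂ)
    + Complex.I *
      ((iteratedFDeriv ℝ 2 f z ![Complex.I • basisVec j, basisVec k] -
        iteratedFDeriv ℝ 2 f z ![basisVec j, Complex.I • basisVec k] : ℝ) : ℂ)) / 4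

/-- The mixed determinant of `n` complex `n × n` matrices (column `j` is taken from the
matrix `A (σ j)`). -/
def mixedDet {n : ℕ} (A : Fin n → Matrix (Fin n) (Fin n) ℂ) : ℂ :=
  (n.factorial : ℂ)⁻¹ *
    ∑ σ : Equiv.Perm (Fin n), Matrix.det (Matrix.of fun i j => A (σ j) i j)

/-- An interface for the Bedford–Taylor mixed Monge–Ampère operator:
`mamix Ω u` represents the positive measure `dd^c u 0 ∧ ⋯ ∧ dd^c u (n-1)` on `Ω`,
defined for (locally) bounded plurisubharmonic inputs.  It is required to be symmetric,
to agree with the classical mixed Monge–Ampère density for `C²` plurisubharmonic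
functions, and to be continuous along uniformly bounded decreasing sequences; these
properties characterize the Bedford–Taylor operator. -/
structure BedfordTaylor (n : ℕ) where
  mamix : Set (Cn n) → (Fin n → (Cn n → ℝ)) → Measure (Cn n)
  symm : ∀ (Ω : Set (Cn n)) (u : Fin n → (Cn n → ℝ)) (σ : Equiv.Perm (Fin n)),
    mamix Ω (u ∘ σ) = mamix Ω u
  smooth_eq : ∀ (Ω : Set (Cn n)), IsOpen Ω → ∀ u : Fin n → (Cn n → ℝ),
    (∀ i, ContDiff ℝ 2 (u i)) → (∀ i, PSHOn (u i) Ω) →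
    mamix Ω u = (volume.restrict Ω).withDensity fun z =>
      ENNReal.ofReal ((4 ^ n * n.factorial : ℝ) *
        (mixedDet fun i => complexHessian (u i) z).re)
  cont : ∀ (Ω : Set (Cn n)), IsOpen Ω →
    ∀ (u : Fin n → ℕ → (Cn n → ℝ)) (v : Fin n → (Cn n → ℝ)),
    (∀ i k, PSHOn (u i k) Ω) → (∀ i, PSHOn (v i) Ω) →
    (∀ i k z, u i (k + 1) z ≤ u i k z) →
    (∀ i, ∀ z ∈ Ω, Tendsto (fun k => u i k z) atTop (nhds (v i z))) →
    (∀ i, ∃ M, ∀ k z, z ∈ Ω → |u i k z| ≤ M) →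
    ∀ f : Cn n → ℝ, Continuous f → HasCompactSupport f → tsupport f ⊆ Ω →
      Tendsto (fun k => ∫ z, f z ∂(mamix Ω fun i => u i k)) atTop
        (nhds (∫ z, f z ∂(mamix Ω v)))

/-- The Monge–Ampère measure `(dd^c u)ⁿ` of `u` on `Ω`. -/
def BedfordTaylor.ma {n : ℕ} (BT : BedfordTaylor n) (Ω : Set (Cn n)) (u : Cn n → ℝ) :
    Measure (Cn n) :=
  BT.mamix Ω fun _ => u

/-- The Bedford–Taylor relative capacity of a set `E` in `Ω`. -/
def BedfordTaylor.cap {n : ℕ} (BT : BedfordTaylor n) (Ω E : Set (Cn n)) : ℝ≥0∞ :=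
  ⨆ w : {w : Cn n → ℝ // PSHOn w Ω ∧ ∀ z ∈ Ω, w z ∈ Set.Icc (0:ℝ) 1},
    BT.ma Ω w.1 E

/-- `ρ` is a `C²` strictly plurisubharmonic defining function for the bounded domain `Ω`,
normalized so that `dd^c ρ ≥ β` (the standard Kähler form). -/
def IsSpscDefining {n : ℕ} (Ω : Set (Cn n)) (ρ : Cn n → ℝ) : Prop :=
  IsOpen Ω ∧ Bornology.IsBounded Ω ∧ Ω = {z | ρ z < 0} ∧ ContDiff ℝ 2 ρ ∧
  (∀ z ∈ frontier Ω, fderiv ℝ ρ z ≠ 0) ∧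
  (∀ z : Cn n, ∀ w : Cn n,
    (‖w‖ : ℝ) ^ 2 ≤ (∑ j, ∑ k, complexHessian ρ z j k * w j * (starRingEnd ℂ) (w k)).re)


/-!
Let `y` be a boundary point nearest to `z`, so `dist z y ≤ ε` and `φ y = 0`. The sandwich
`h + φ ≤ u ≤ h` gives `u (z + ζ) - u z ≤ (h (z + ζ) - h z) + (φ y - φ z)`, and both brackets are
at most a Hölder constant times `ε ^ α`. The only geometric input is that the closed `δ`-ball
around `z` stays in `closure Ω`, which holds because balls are connected.
-/

/-- The inner parallel set `Ω_δ = {z ∈ Ω : dist(z, ∂Ω) > δ}`. -/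
def innerParallelSet {X : Type*} [PseudoMetricSpace X] (s : Set X) (δ : ℝ) : Set X :=
  {w ∈ s | δ < Metric.infDist w (frontier s)}

open Metric

section InnerParallelSet

variable {X : Type*} [PseudoMetricSpace X] {s : Set X} {δ : ℝ} {z : X}

lemma le_infDist_frontier_of_mem_closure_innerParallelSet
    (hz : z ∈ closure (innerParallelSet s δ)) : δ ≤ infDist z (frontier s) :=
  closure_minimal (fun _ hw => hw.2.le)
    (isClosed_le continuous_const (continuous_infDist_pt _)) hz

end InnerParallelSet

section NormedSpace

variable {E : Type*} [NormedAddCommGroup E] [NormedSpace ℝ E] {s : Set E} {δ ε : ℝ} {z : E}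

lemma ball_infDist_frontier_subset_interior (hz : z ∈ closure s) :
    ball z (infDist z (frontier s)) ⊆ interior s := by
  set r := infDist z (frontier s)
  have hmem : ∀ x ∈ ball z r, x ∈ closure s → x ∈ interior s := fun x hx hxs => by
    by_contra hxi
    exact Set.disjoint_left.1 disjoint_ball_infDist hx ⟨hxs, hxi⟩
  intro x hx
  have hz_ball : z ∈ ball z r := mem_ball_self (pos_of_mem_ball hx)
  refine (convex_ball z r).isPreconnected.subset_of_closure_inter_subset isOpen_interior
    ⟨z, hz_ball, hmem z hz_ball hz⟩ ?_ hx
  rintro y ⟨hy_cl, hy_ball⟩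
  exact hmem y hy_ball (closure_mono interior_subset hy_cl)

lemma closedBall_subset_closure_of_mem_closure_innerParallelSet (hδ : 0 < δ)
    (hz : z ∈ closure (innerParallelSet s δ)) : closedBall z δ ⊆ closure s := by
  have hz_cl : z ∈ closure s := closure_mono (Set.sep_subset _ _) hz
  calc closedBall z δ = closure (ball z δ) := (closure_ball z hδ.ne').symm
    _ ⊆ closure (interior s) := closure_mono <|
      (ball_subset_ball (le_infDist_frontier_of_mem_closure_innerParallelSet hz)).trans
        (ball_infDist_frontier_subset_interior hz_cl)
    _ ⊆ closure s := closure_mono interior_subset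

lemma exists_mem_frontier_dist_le_of_mem_closure_innerParallelSet_diff [ProperSpace E]
    (hδ : 0 < δ) (hz : z ∈ closure (innerParallelSet s δ) \ innerParallelSet s ε) :
    ∃ y ∈ frontier s, dist z y ≤ ε := by
  have hδz := le_infDist_frontier_of_mem_closure_innerParallelSet hz.1
  have hzs : z ∈ s := interior_subset <|
    ball_infDist_frontier_subset_interior (closure_mono (Set.sep_subset _ _) hz.1)
      (mem_ball_self (hδ.trans_le hδz))
  have hfr : (frontier s).Nonempty := by
    rcases (frontier s).eq_empty_or_nonempty with h | h
    · rw [h, infDist_empty] at hδz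
      linarith
    · exact h
  obtain ⟨y, hy, hzy⟩ := isClosed_frontier.exists_infDist_eq_dist hfr z
  exact ⟨y, hy, hzy ▸ not_lt.1 fun hε => hz.2 ⟨hzs, hε⟩⟩

end NormedSpace

lemma le_add_of_holder_sandwich {X : Type*} [PseudoMetricSpace X] {K : Set X}
    {h φ u : X → ℝ} {Ch Cφ α : ℝ≥0} (hhH : HolderOnWith Ch α h K)
    (hφH : HolderOnWith Cφ α φ K) (hsq : ∀ x ∈ K, h x + φ x ≤ u x ∧ u x ≤ h x)
    {x x' y : X} (hx : x ∈ K) (hx' : x' ∈ K) (hy : y ∈ K) (hφy : φ y = 0) {ε : ℝ}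
    (hx'x : dist x' x ≤ ε) (hxy : dist x y ≤ ε) :
    u x' ≤ u x + (Ch + Cφ) * ε ^ (α : ℝ) := by
  have hh := (abs_le.1 (hhH.dist_le_of_le hx' hx hx'x)).2
  have hφ := (abs_le.1 (hφH.dist_le_of_le hx hy hxy)).1
  rw [hφy] at hφ
  linarith [(hsq x hx).1, (hsq x' hx').2]

theorem boundary_holder_estimate_general {n : ℕ} (Ω : Set (Cn n)) (φ h u : Cn n → ℝ)
    (α : ℝ≥0) (Cφ Ch : ℝ≥0)
    (hφH : HolderOnWith Cφ α φ (closure Ω)) (hφ0 : ∀ z ∈ frontier Ω, φ z = 0)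
    (hhH : HolderOnWith Ch α h (closure Ω))
    (hsq : ∀ z ∈ closure Ω, h z + φ z ≤ u z ∧ u z ≤ h z) :
    ∃ C : ℝ, 0 < C ∧ ∀ δ ε : ℝ, 0 < δ → δ ≤ ε →
      ∀ z ∈ closure {w ∈ Ω | δ < Metric.infDist w (frontier Ω)} \
            {w ∈ Ω | ε < Metric.infDist w (frontier Ω)},
        ∀ ζ : Cn n, ‖ζ‖ ≤ δ → u (z + ζ) ≤ u z + C * ε ^ (α : ℝ) := by
  refine ⟨Ch + Cφ + 1, by positivity, fun δ ε hδ hδε z hz ζ hζ => ?_⟩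
  have hzΩ : z ∈ closure Ω := closure_mono (Set.sep_subset _ _) hz.1
  have hzζ : z + ζ ∈ closure Ω :=
    closedBall_subset_closure_of_mem_closure_innerParallelSet hδ hz.1 (by simpa using hζ)
  obtain ⟨y, hy, hzy⟩ := exists_mem_frontier_dist_le_of_mem_closure_innerParallelSet_diff hδ hz
  have hεα : 0 ≤ ε ^ (α : ℝ) := Real.rpow_nonneg (hδ.le.trans hδε) _
  calc u (z + ζ)
      ≤ u z + (Ch + Cφ) * ε ^ (α : ℝ) :=
        le_add_of_holder_sandwich hhH hφH hsq hzΩ hzζ (frontier_subset_closure hy) (hφ0 y hy)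
          (by simpa using hζ.trans hδε) hzy
    _ ≤ u z + (Ch + Cφ + 1) * ε ^ (α : ℝ) := by nlinarith

/-- Boundary Hölder estimate (Lemma 4.1): if `h + φ ≤ u ≤ h` on the closure of `Ω`,
with `h` the (α-Hölder, plurisubharmonic, maximal) Perron–Bremermann envelope of `ψ` and
`φ` an α-Hölder plurisubharmonic function vanishing on `∂Ω`, then there exists `C`
(depending only on the Hölder norms of `h` and `φ`) such that for `0 < δ ≤ ε` and
`z ∈ closure(Ω_δ) ∖ Ω_ε`, `u_δ(z) = sup_{|ζ| ≤ δ} u(z+ζ) ≤ u(z) + C ε^α`. -/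
theorem boundary_holder_estimate {n : ℕ} (hn : 0 < n)
    (Ω : Set (Cn n)) (ρ : Cn n → ℝ) (hΩ : IsSpscDefining Ω ρ) (hne : Ω.Nonempty)
    (φ h u ψ : Cn n → ℝ)
    (α : ℝ≥0) (hα0 : 0 < α) (hα1 : (α : ℝ) ≤ 1) (Cφ Ch : ℝ≥0)
    (hφH : HolderOnWith Cφ α φ (closure Ω)) (hφpsh : PSHOn φ Ω)
    (hφ0 : ∀ z ∈ frontier Ω, φ z = 0)
    (hhH : HolderOnWith Ch α h (closure Ω)) (hhpsh : PSHOn h Ω)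
    (hhψ : ∀ z ∈ frontier Ω, h z = ψ z)
    (hsq : ∀ z ∈ closure Ω, h z + φ z ≤ u z ∧ u z ≤ h z) :
    ∃ C : ℝ, 0 < C ∧ ∀ δ ε : ℝ, 0 < δ → δ ≤ ε →
      ∀ z ∈ closure {w ∈ Ω | δ < Metric.infDist w (frontier Ω)} \
            {w ∈ Ω | ε < Metric.infDist w (frontier Ω)},
        ∀ ζ : Cn n, ‖ζ‖ ≤ δ → u (z + ζ) ≤ u z + C * ε ^ (α : ℝ) :=
  boundary_holder_estimate_general Ω φ h u α Cφ Ch hφH hφ0 hhH hsq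

end
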